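/- For the 3-agent problem with preferences ⪰₁ = ⪰₂ = (a,b,c) and ⪰₃ = (b,c,a), the assignment x with x₁ = x₂ = (1/2, 1/2, 0) and x₃ = (0,0,1) is the Rawlsian assignment: no bistochastic 3×3 matrix R-dominates it. -/

import Mathlib

open Finset

/-- An n×n matrix with nonnegative real entries whose rows and columns each sum to 1. -/
def Bistochastic {n : ℕ} (x : Fin n → Fin n → ℝ) : Prop :=
  (∀ i o, 0 ≤ x i o) ∧ (∀ i, ∑ o, x i o = 1) ∧ (∀ o, ∑ i, x i o = 1)

/-- `tailProb rank x i k` = probability that agent `i` receives an object ranked `k`-th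
or worse (ranks are 0-indexed: rank 0 = most preferred). -/
def tailProb {n : ℕ} (rank : Fin n → Fin n → Fin n) (x : Fin n → Fin n → ℝ)
    (i k : Fin n) : ℝ :=
  ∑ o ∈ Finset.univ.filter (fun o => k ≤ rank i o), x i o

/-- The values of `v` rearranged in non-increasing order. -/
noncomputable def sortedDesc {n : ℕ} (v : Fin n → ℝ) : Fin n → ℝ :=
  fun j => v (Tuple.sort (fun i => -v i) j)

/-- Block `t` of `Bvec rank x` is the non-increasing rearrangement of the tail
probabilities at threshold `n-1-t`; so blocks run from the worst rank down. -/
noncomputable def Bvec {n : ℕ} (rank : Fin n → Fin n → Fin n) (x : Fin n → Fin n → ℝ) :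
    Fin n → Fin n → ℝ :=
  fun t => sortedDesc (fun i => tailProb rank x i t.rev)

/-- Lexicographic strict order on doubly-indexed vectors (outer index first). -/
def BlockLexLt {α β : Type*} [LinearOrder α] [LinearOrder β] (u v : α → β → ℝ) : Prop :=
  ∃ t s, u t s < v t s ∧ ∀ t' s', (t' < t ∨ (t' = t ∧ s' < s)) → u t' s' = v t' s'

/-- `x` Rawlsian-dominates `y`. -/
def RDom {n : ℕ} (rank : Fin n → Fin n → Fin n) (x y : Fin n → Fin n → ℝ) : Prop :=
  BlockLexLt (Bvec rank x) (Bvec rank y)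

/-- A Rawlsian assignment: a bistochastic matrix not R-dominated by any other. -/
def Rawlsian {n : ℕ} (rank : Fin n → Fin n → Fin n) (x : Fin n → Fin n → ℝ) : Prop :=
  Bistochastic x ∧ ∀ y, Bistochastic y → ¬ RDom rank y x

/-- Ranks: agents 1 and 2 rank `a ≻ b ≻ c`; agent 3 ranks `b ≻ c ≻ a`. -/
def rank15 : Fin 3 → Fin 3 → Fin 3 := ![![0, 1, 2], ![0, 1, 2], ![2, 0, 1]]

/-- The claimed Rawlsian assignment. -/
noncomputable def x15 : Fin 3 → Fin 3 → ℝ :=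
  ![![1 / 2, 1 / 2, 0], ![1 / 2, 1 / 2, 0], ![0, 0, 1]]

lemma sortedDesc_anti {n : ℕ} (v : Fin n → ℝ) : Antitone (sortedDesc v) := by
  intro a b hab
  have h := Tuple.monotone_sort (fun i => -v i) hab
  simp only [Function.comp_apply] at h
  simpa [sortedDesc] using h

lemma sortedDesc_sum {n : ℕ} (v : Fin n → ℝ) : ∑ j, sortedDesc v j = ∑ i, v i :=
  Equiv.sum_comp (Tuple.sort (fun i => -v i)) v

lemma sortedDesc_const {n : ℕ} (v : Fin n → ℝ) (c : ℝ) (h : ∀ i, v i = c) (j : Fin n) :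
    sortedDesc v j = c := h _

lemma sortedDesc_nonneg {n : ℕ} (v : Fin n → ℝ) (h : ∀ i, 0 ≤ v i) (j : Fin n) :
    0 ≤ sortedDesc v j := h _

lemma eq_of_sortedDesc_const {n : ℕ} (v : Fin n → ℝ) (c : ℝ)
    (h : ∀ j, sortedDesc v j = c) (i : Fin n) : v i = c := by
  have := h ((Tuple.sort (fun i => -v i)).symm i)
  simpa [sortedDesc] using this

lemma le_sortedDesc_zero {n : ℕ} (v : Fin (n+1) → ℝ) (i : Fin (n+1)) :
    v i ≤ sortedDesc v 0 := by
  have h := sortedDesc_anti v (Fin.zero_le ((Tuple.sort (fun i => -v i)).symm i))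
  have h2 : sortedDesc v ((Tuple.sort (fun i => -v i)).symm i) = v i := by
    simp [sortedDesc]
  linarith

lemma sortedDesc_eq_of {n : ℕ} (v w : Fin n → ℝ) (σ : Equiv.Perm (Fin n))
    (h : ∀ j, w j = v (σ j)) (hw : Antitone w) : sortedDesc v = w := by
  have hmono : Monotone ((fun i => -v i) ∘ σ) := by
    intro a b hab
    simp only [Function.comp_apply]
    have := hw hab
    rw [h a, h b] at this
    linarith
  have heq := (Tuple.comp_sort_eq_comp_iff_monotone (f := fun i => -v i) (σ := σ)).mpr hmono
  funext j
  have hj := congrFun heq j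
  simp only [Function.comp_apply] at hj
  have hj' : v (σ j) = v (Tuple.sort (fun i => -v i) j) := by linarith
  rw [sortedDesc, ← hj', ← h]


lemma tailProb_filter (rank : Fin 3 → Fin 3 → Fin 3) (y : Fin 3 → Fin 3 → ℝ) (i k : Fin 3)
    (S : Finset (Fin 3)) (hS : Finset.univ.filter (fun o => k ≤ rank i o) = S) :
    tailProb rank y i k = ∑ o ∈ S, y i o := by
  rw [tailProb, hS]

lemma antitone3 (w : Fin 3 → ℝ) (h1 : w 1 ≤ w 0) (h2 : w 2 ≤ w 1) : Antitone w := by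
  intro a b hab
  fin_cases a <;> fin_cases b <;>
    first
      | rfl
      | exact h1
      | exact h2
      | exact h2.trans h1
      | exact absurd hab (by decide)

/-- `x15` is the Rawlsian assignment of this problem: no bistochastic matrix
R-dominates it. -/
theorem example_rawlsian : Rawlsian rank15 x15 := by
  have hrev0 : (0 : Fin 3).rev = 2 := by decide
  have hrev1 : (1 : Fin 3).rev = 1 := by decide
  have hrev2 : (2 : Fin 3).rev = 0 := by decide
  -- filter computations
  have hf02 : Finset.univ.filter (fun o => (2:Fin 3) ≤ rank15 0 o) = {2} := by decide
  have hf12 : Finset.univ.filter (fun o => (2:Fin 3) ≤ rank15 1 o) = {2} := by decide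
  have hf22 : Finset.univ.filter (fun o => (2:Fin 3) ≤ rank15 2 o) = {0} := by decide
  have hf01 : Finset.univ.filter (fun o => (1:Fin 3) ≤ rank15 0 o) = {1, 2} := by decide
  have hf11 : Finset.univ.filter (fun o => (1:Fin 3) ≤ rank15 1 o) = {1, 2} := by decide
  have hf21 : Finset.univ.filter (fun o => (1:Fin 3) ≤ rank15 2 o) = {0, 2} := by decide
  have hf0 : ∀ i : Fin 3, Finset.univ.filter (fun o => (0:Fin 3) ≤ rank15 i o) = Finset.univ := by
    decide
  have hpair12 : ((1:Fin 3) : Fin 3) ≠ 2 := by decide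
  have hpair02 : ((0:Fin 3) : Fin 3) ≠ 2 := by decide
  constructor
  · refine ⟨?_, ?_, ?_⟩
    · intro i o; fin_cases i <;> fin_cases o <;> norm_num [x15, Matrix.cons_val_two]
    · intro i; fin_cases i <;> rw [Fin.sum_univ_three] <;> norm_num [x15, Matrix.cons_val_two]
    · intro o; fin_cases o <;> rw [Fin.sum_univ_three] <;> norm_num [x15, Matrix.cons_val_two]
  · rintro y hy ⟨t, s, hlt, hprev⟩
    obtain ⟨hpos, hrow, hcol⟩ := hy
    -- Block 0 of x15 is all zeros
    have htailx2 : ∀ i, tailProb rank15 x15 i 2 = 0 := by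
      intro i
      fin_cases i <;> simp only [Fin.zero_eta, Fin.mk_one, Fin.reduceFinMk]
      · rw [tailProb_filter _ _ _ _ _ hf02, Finset.sum_singleton]; norm_num [x15, Matrix.cons_val_two]
      · rw [tailProb_filter _ _ _ _ _ hf12, Finset.sum_singleton]; norm_num [x15, Matrix.cons_val_two]
      · rw [tailProb_filter _ _ _ _ _ hf22, Finset.sum_singleton]; norm_num [x15, Matrix.cons_val_two]
    have hBx0 : ∀ s', Bvec rank15 x15 0 s' = 0 := fun s' => by
      simp only [Bvec, hrev0]; exact sortedDesc_const _ 0 htailx2 s'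
    -- Block 2 of any row-stochastic matrix is all ones
    have htail0 : ∀ z : Fin 3 → Fin 3 → ℝ, (∀ i, ∑ o, z i o = 1) →
        ∀ i, tailProb rank15 z i 0 = 1 := by
      intro z hz i
      rw [tailProb_filter _ _ _ _ _ (hf0 i)]
      exact hz i
    have hBx2 : ∀ s', Bvec rank15 x15 2 s' = 1 := fun s' => by
      simp only [Bvec, hrev2]
      exact sortedDesc_const _ 1 (htail0 x15 (by
        intro i; fin_cases i <;> rw [Fin.sum_univ_three] <;> norm_num [x15, Matrix.cons_val_two])) s'
    have hBy2 : ∀ s', Bvec rank15 y 2 s' = 1 := fun s' => by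
      simp only [Bvec, hrev2]
      exact sortedDesc_const _ 1 (htail0 y hrow) s'
    -- Block 1 of x15
    have htailx1 : (fun i => tailProb rank15 x15 i 1) = ![1/2, 1/2, 1] := by
      funext i
      fin_cases i <;> simp only [Fin.zero_eta, Fin.mk_one, Fin.reduceFinMk]
      · rw [tailProb_filter _ _ _ _ _ hf01, Finset.sum_pair hpair12]; norm_num [x15, Matrix.cons_val_two]
      · rw [tailProb_filter _ _ _ _ _ hf11, Finset.sum_pair hpair12]; norm_num [x15, Matrix.cons_val_two]
      · rw [tailProb_filter _ _ _ _ _ hf21, Finset.sum_pair hpair02]; norm_num [x15, Matrix.cons_val_two]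
    have hσ : ∀ j : Fin 3, (Equiv.swap (0:Fin 3) 2) j = ![2, 1, 0] j := by decide
    have hBx1 : Bvec rank15 x15 1 = ![1, 1/2, 1/2] := by
      simp only [Bvec, hrev1, htailx1]
      refine sortedDesc_eq_of _ _ (Equiv.swap (0:Fin 3) 2) (fun j => ?_) ?_
      · rw [hσ j]; fin_cases j <;> simp only [Fin.zero_eta, Fin.mk_one, Fin.reduceFinMk] <;> norm_num [Matrix.cons_val_two]
      · exact antitone3 _ (by norm_num) (by norm_num [Matrix.cons_val_two])
    fin_cases t <;>
      simp only [Fin.zero_eta, Fin.mk_one, Fin.reduceFinMk] at hlt hprev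
    · -- t = 0 : impossible, block-0 entries of y are nonnegative
      have h0 : 0 ≤ Bvec rank15 y 0 s := by
        simp only [Bvec, hrev0]
        exact sortedDesc_nonneg _ (fun i => Finset.sum_nonneg fun o _ => hpos i o) s
      rw [hBx0 s] at hlt
      linarith
    · -- t = 1
      have hprev0 : ∀ s', Bvec rank15 y 0 s' = 0 := by
        intro s'
        rw [hprev 0 s' (Or.inl (by decide)), hBx0 s']
      have htaily2 : ∀ i, tailProb rank15 y i 2 = 0 := by
        have h := eq_of_sortedDesc_const (fun i => tailProb rank15 y i (0:Fin 3).rev) 0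
          (fun j => hprev0 j)
        rw [hrev0] at h
        exact h
      have ha : y 0 2 = 0 := by
        have h := htaily2 0
        rwa [tailProb_filter _ _ _ _ _ hf02, Finset.sum_singleton] at h
      have hb : y 1 2 = 0 := by
        have h := htaily2 1
        rwa [tailProb_filter _ _ _ _ _ hf12, Finset.sum_singleton] at h
      have hc : y 2 0 = 0 := by
        have h := htaily2 2
        rwa [tailProb_filter _ _ _ _ _ hf22, Finset.sum_singleton] at h
      have hr0 := hrow 0; have hr1 := hrow 1; have hr2 := hrow 2
      have hc0 := hcol 0; have hc2 := hcol 2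
      rw [Fin.sum_univ_three] at hr0 hr1 hr2 hc0 hc2
      have hy22 : y 2 2 = 1 := by linarith
      have hsum11 : y 0 1 + y 1 1 = 1 := by linarith
      -- tail values of y at k = 1
      have hv1 : (fun i => tailProb rank15 y i 1) = ![y 0 1, y 1 1, 1] := by
        funext i
        fin_cases i <;> simp only [Fin.zero_eta, Fin.mk_one, Fin.reduceFinMk]
        · rw [tailProb_filter _ _ _ _ _ hf01, Finset.sum_pair hpair12]
          simp; linarith
        · rw [tailProb_filter _ _ _ _ _ hf11, Finset.sum_pair hpair12]
          simp; linarith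
        · rw [tailProb_filter _ _ _ _ _ hf21, Finset.sum_pair hpair02]
          simp; linarith
      have hBy1 : Bvec rank15 y 1 = sortedDesc ![y 0 1, y 1 1, 1] := by
        simp only [Bvec, hrev1, hv1]
      have hmax : (1:ℝ) ≤ Bvec rank15 y 1 0 := by
        rw [hBy1]
        have h := le_sortedDesc_zero ![y 0 1, y 1 1, 1] 2
        simpa using h
      have hsum : Bvec rank15 y 1 0 + Bvec rank15 y 1 1 + Bvec rank15 y 1 2 = 2 := by
        rw [hBy1]
        have h := sortedDesc_sum ![y 0 1, y 1 1, 1]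
        rw [Fin.sum_univ_three, Fin.sum_univ_three] at h
        simp at h
        linarith
      have hanti1 : Bvec rank15 y 1 1 ≤ Bvec rank15 y 1 0 := by
        rw [hBy1]; exact sortedDesc_anti _ (by decide : (0:Fin 3) ≤ 1)
      have hanti2 : Bvec rank15 y 1 2 ≤ Bvec rank15 y 1 1 := by
        rw [hBy1]; exact sortedDesc_anti _ (by decide : (1:Fin 3) ≤ 2)
      rw [hBx1] at hlt
      fin_cases s <;> simp only [Fin.zero_eta, Fin.mk_one, Fin.reduceFinMk] at hlt hprev ⊢
      · simp at hlt; linarith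
      · have h10 : Bvec rank15 y 1 0 = 1 := by
          rw [hprev 1 0 (Or.inr ⟨rfl, by decide⟩), hBx1]; simp
        simp at hlt
        linarith
      · have h10 : Bvec rank15 y 1 0 = 1 := by
          rw [hprev 1 0 (Or.inr ⟨rfl, by decide⟩), hBx1]; simp
        have h11 : Bvec rank15 y 1 1 = 1/2 := by
          rw [hprev 1 1 (Or.inr ⟨rfl, by decide⟩), hBx1]; norm_num
        simp at hlt
        linarith
    · -- t = 2
      rw [hBy2 s, hBx2 s] at hlt
      linarith
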